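/- For every positive integer k, the tree T_k on 9k+1 vertices obtained by taking k disjoint copies of the path P₉ and joining the central vertex of each copy to one new vertex v has at least 13^k 4-matchings. Consequently the maximum number of 4-matchings over trees of order n is at least Ω(13^{n/9}). -/

import Mathlib

/-- distance between two edges of a graph: the minimum graph distance between an
endpoint of one and an endpoint of the other. -/
noncomputable def edgeDist {V : Type*} (G : SimpleGraph V) (e f : Sym2 V) : ℕ :=
  sInf {d : ℕ | ∃ u ∈ e, ∃ v ∈ f, d = G.dist u v}

/-- an `r`-matching: a set of edges of `G`, any two distinct ones at distance at
least `r`. -/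
def IsRMatching {V : Type*} (G : SimpleGraph V) (r : ℕ) (M : Set (Sym2 V)) : Prop :=
  M ⊆ G.edgeSet ∧ ∀ e ∈ M, ∀ f ∈ M, e ≠ f → r ≤ edgeDist G e f

/-- the tree obtained from `k` disjoint copies of the path `P₉` by joining the central
vertex of each copy to one new vertex (the vertex `none`). -/
def treeP9 (k : ℕ) : SimpleGraph (Option (Fin k × Fin 9)) :=
  SimpleGraph.fromRel (fun x y =>
    (∃ (i : Fin k) (a : Fin 8), x = some (i, a.castSucc) ∧ y = some (i, a.succ)) ∨
    (x = none ∧ ∃ i : Fin k, y = some (i, 4)))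

/-
Number the edges of each copy of `P₉` by `0, …, 7`, edge `a` joining the vertices `a` and
`a + 1`. Choosing independently in every copy one of the 13 sets of edges that avoid the two
central edges `3, 4` and are at least `5` apart gives `13 ^ k` distinct 4-matchings: inside a
copy distances are read off the path, and a path between two copies runs through both centres
and the hub, so vertices off the centres of different copies are at distance at least
`1 + 2 + 1`. Both lower bounds on distances come from integer potentials changing by at most one
along each edge. For general `n`, hang the remaining vertices as leaves on the hub; collapsing
them back onto the hub does not increase distances, so every 4-matching of `T_k` stays one.
-/

open SimpleGraph Function

variable {V W : Type*}

section EdgeDist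

variable {G : SimpleGraph V} {e f : Sym2 V}

lemma le_edgeDist {r : ℕ} (h : ∀ u ∈ e, ∀ v ∈ f, r ≤ G.dist u v) :
    r ≤ edgeDist G e f := by
  have hne : {d : ℕ | ∃ u ∈ e, ∃ v ∈ f, d = G.dist u v}.Nonempty := by
    induction e using Sym2.ind with | _ x _ =>
    induction f using Sym2.ind with | _ z _ =>
    exact ⟨_, x, Sym2.mem_mk_left _ _, z, Sym2.mem_mk_left _ _, rfl⟩
  obtain ⟨u, hu, v, hv, hd⟩ := Nat.sInf_mem hne
  rw [edgeDist, hd]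
  exact h u hu v hv

lemma edgeDist_le {u v : V} (hu : u ∈ e) (hv : v ∈ f) : edgeDist G e f ≤ G.dist u v :=
  Nat.sInf_le ⟨u, hu, v, hv, rfl⟩

end EdgeDist

lemma abs_sub_le_dist_of_lipschitz {G : SimpleGraph V} (φ : V → ℤ)
    (hφ : ∀ a b, G.Adj a b → |φ a - φ b| ≤ 1) {u v : V} (huv : G.Reachable u v) :
    |φ u - φ v| ≤ G.dist u v := by
  obtain ⟨p, hp⟩ := huv.exists_walk_length_eq_dist
  rw [← hp]
  clear hp huv
  induction p with
  | nil => simp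
  | @cons x y z h q ih =>
    have htri := abs_sub_le (φ x) (φ y) (φ z)
    have hstep := hφ x y h
    push_cast [Walk.length_cons]
    linarith

lemma dist_le_dist_of_eq_or_adj {G : SimpleGraph V} {H : SimpleGraph W} (hG : G.Connected)
    (r : W → V) (hr : ∀ a b, H.Adj a b → r a = r b ∨ G.Adj (r a) (r b)) {a b : W}
    (hab : H.Reachable a b) : G.dist (r a) (r b) ≤ H.dist a b := by
  obtain ⟨p, hp⟩ := hab.exists_walk_length_eq_dist
  rw [← hp]
  clear hp hab
  induction p with
  | nil => simp
  | @cons x y z h q ih =>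
    have hxy : G.dist (r x) (r y) ≤ 1 := by
      rcases hr x y h with hxy | hxy
      · simp [hxy]
      · exact (dist_eq_one_iff_adj.mpr hxy).le
    have := hG.dist_triangle (u := r x) (v := r y) (w := r z)
    rw [Walk.length_cons]
    omega

theorem card_isRMatching_le_of_retraction [Finite W] {G : SimpleGraph V} {H : SimpleGraph W}
    (hG : G.Connected) (f : G →g H) (r : W → V) (hrf : ∀ v, r (f v) = v)
    (hr : ∀ a b, H.Adj a b → r a = r b ∨ G.Adj (r a) (r b)) (d : ℕ) :
    Nat.card {M : Set (Sym2 V) // IsRMatching G d M} ≤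
      Nat.card {M : Set (Sym2 W) // IsRMatching H d M} := by
  have hf : Injective f := LeftInverse.injective hrf
  have hdist (u v : V) : G.dist u v ≤ H.dist (f u) (f v) := by
    simpa only [hrf] using dist_le_dist_of_eq_or_adj hG r hr ((hG u v).map f)
  have hedge (e e' : Sym2 V) : edgeDist G e e' ≤ edgeDist H (e.map f) (e'.map f) := by
    refine le_edgeDist fun x hx y hy => ?_
    obtain ⟨u, hu, rfl⟩ := Sym2.mem_map.mp hx
    obtain ⟨v, hv, rfl⟩ := Sym2.mem_map.mp hy
    exact (edgeDist_le hu hv).trans (hdist u v)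
  refine Nat.card_le_card_of_injective
    (fun M => ⟨Sym2.map f '' M.1, ?_, ?_⟩) fun M N hMN => ?_
  · rintro _ ⟨e, he, rfl⟩
    exact f.map_mem_edgeSet (M.2.1 he)
  · rintro _ ⟨e, he, rfl⟩ _ ⟨e', he', rfl⟩ hne
    exact (M.2.2 e he e' he' (ne_of_apply_ne _ hne)).trans (hedge e e')
  · exact Subtype.ext <|
      Set.image_injective.mpr (Sym2.map.injective hf) (congrArg Subtype.val hMN)

lemma card_isRMatching_le_map_equiv [Finite W] {G : SimpleGraph V} (hG : G.Connected)
    (e : V ≃ W) (d : ℕ) : Nat.card {M : Set (Sym2 V) // IsRMatching G d M} ≤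
      Nat.card {M : Set (Sym2 W) // IsRMatching (G.map e.toEmbedding) d M} :=
  card_isRMatching_le_of_retraction hG (Iso.map e G).toHom e.symm e.symm_apply_apply
    (fun _ _ hab => .inr ((Iso.map e G).symm.map_adj_iff.mpr hab)) d

def parentGraph (p : V → V) : SimpleGraph V :=
  SimpleGraph.fromRel fun x y => p x = y

lemma parentGraph_adj {p : V → V} {x y : V} :
    (parentGraph p).Adj x y ↔ x ≠ y ∧ (p x = y ∨ p y = x) :=
  fromRel_adj _ x y

lemma lipschitz_parentGraph {p : V → V} (φ : V → ℤ) (hφ : ∀ v, |φ v - φ (p v)| ≤ 1) :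
    ∀ a b, (parentGraph p).Adj a b → |φ a - φ b| ≤ 1 := by
  intro a b hab
  obtain ⟨-, rfl | rfl⟩ := parentGraph_adj.mp hab
  · exact hφ a
  · rw [abs_sub_comm]
    exact hφ b

def parentGraph.homOfSemiconj {p : V → V} {q : W → W} (f : V → W) (hf : Injective f)
    (hfp : Semiconj f p q) : parentGraph p →g parentGraph q where
  toFun := f
  map_rel' {a b} hab := by
    obtain ⟨hne, rfl | rfl⟩ := parentGraph_adj.mp hab
    · exact parentGraph_adj.mpr ⟨hf.ne hne, .inl (hfp a).symm⟩
    · exact parentGraph_adj.mpr ⟨hf.ne hne, .inr (hfp b).symm⟩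

lemma parentGraph_eq_or_adj_of_semiconj {p : V → V} {q : W → W} (r : W → V)
    (hrq : Semiconj r q p) {a b : W} (hab : (parentGraph q).Adj a b) :
    r a = r b ∨ (parentGraph p).Adj (r a) (r b) := by
  by_cases hr : r a = r b
  · exact .inl hr
  · obtain ⟨-, rfl | rfl⟩ := parentGraph_adj.mp hab
    · exact .inr (parentGraph_adj.mpr ⟨hr, .inl (hrq a).symm⟩)
    · exact .inr (parentGraph_adj.mpr ⟨hr, .inr (hrq b).symm⟩)

/-- The edges `s(v, p v)`, `v ≠ root`, are pairwise distinct, so a connected parent graph has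
one edge fewer than vertices. -/
theorem isTree_parentGraph [Finite V] {p : V → V} (root : V) (rank : V → ℕ)
    (hroot : p root = root) (hrank : ∀ v, v ≠ root → rank (p v) < rank v) :
    (parentGraph p).IsTree := by
  classical
  have hp_ne {v : V} (hv : v ≠ root) : v ≠ p v :=
    fun h => (hrank v hv).ne (congrArg rank h).symm
  have : Nonempty V := ⟨root⟩
  have hconn : (parentGraph p).Connected := by
    have hreach (v : V) : (parentGraph p).Reachable v root := by
      induction hv : rank v using Nat.strong_induction_on generalizing v with | _ n ih =>
      by_cases h : v = root
      · rw [h]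
      · exact (parentGraph_adj.mpr ⟨hp_ne h, .inl rfl⟩).reachable.trans
          (ih _ (hv ▸ hrank v h) _ rfl)
    exact ⟨fun u v => (hreach u).trans (hreach v).symm⟩
  refine isTree_iff_connected_and_card.mpr ⟨hconn, ?_⟩
  let toEdge (v : {v // v ≠ root}) : (parentGraph p).edgeSet :=
    ⟨s(v.1, p v.1), parentGraph_adj.mpr ⟨hp_ne v.2, .inl rfl⟩⟩
  have hbij : Bijective toEdge := by
    constructor
    · rintro ⟨v, hv⟩ ⟨w, hw⟩ h
      rcases Sym2.eq_iff.mp (congrArg Subtype.val h) with ⟨rfl, -⟩ | ⟨rfl, hpv⟩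
      · rfl
      · have := (hrank _ hv).trans (hrank w hw)
        rw [hpv] at this
        exact absurd this (lt_irrefl _)
    · rintro ⟨e, he⟩
      induction e using Sym2.ind with | _ x y =>
      obtain ⟨hxy, hpx | hpy⟩ := parentGraph_adj.mp he
      · refine ⟨⟨x, fun h => hxy ?_⟩, Subtype.ext (by simp [toEdge, hpx])⟩
        rw [← hpx, h, hroot]
      · refine ⟨⟨y, fun h => hxy ?_⟩, Subtype.ext (by simp [toEdge, hpy, Sym2.eq_swap])⟩
        rw [← hpy, h, hroot]
  rw [← Nat.card_eq_of_bijective toEdge hbij, ← Finite.card_option,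
    Nat.card_congr (Equiv.optionSubtypeNe root)]

section TreeP9

def towardsCenter (a : Fin 9) : Option (Fin 9) :=
  if a < 4 then some (a + 1) else if a = 4 then none else some (a - 1)

lemma towardsCenter_eq_none_iff {a : Fin 9} : towardsCenter a = none ↔ a = 4 := by
  revert a
  decide

lemma towardsCenter_eq_some {a b : Fin 9} (h : towardsCenter a = some b) :
    |(a : ℤ) - b| = 1 ∧ |(a : ℤ) - 4| = |(b : ℤ) - 4| + 1 := by
  revert a b
  decide

lemma succ_eq_or_eq_succ_iff_towardsCenter (a b : Fin 9) :
    (b.val = a.val + 1 ∨ a.val = b.val + 1) ↔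
      (towardsCenter a = some b ∨ towardsCenter b = some a) := by
  revert a b
  decide

lemma exists_fin8_castSucc_succ (a b : Fin 9) :
    (∃ c : Fin 8, a = c.castSucc ∧ b = c.succ) ↔ b.val = a.val + 1 := by
  refine ⟨?_, fun h => ⟨⟨a, by omega⟩, Fin.ext rfl, Fin.ext (by simp [h])⟩⟩
  rintro ⟨c, rfl, rfl⟩
  simp

variable {k : ℕ}

def towardsHub : Option (Fin k × Fin 9) → Option (Fin k × Fin 9)
  | none => none
  | some (i, a) => (towardsCenter a).map (i, ·)

lemma treeP9_eq_parentGraph : treeP9 k = parentGraph towardsHub := by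
  ext x y
  rw [treeP9, parentGraph, fromRel_adj, fromRel_adj]
  refine and_congr_right fun hxy => ?_
  rcases x with _ | ⟨i, a⟩ <;> rcases y with _ | ⟨j, b⟩
  · exact absurd rfl hxy
  · simp [towardsHub, towardsCenter_eq_none_iff]
  · simp [towardsHub, towardsCenter_eq_none_iff]
  · by_cases hij : i = j
    · subst hij
      simpa [towardsHub, exists_fin8_castSucc_succ] using
        succ_eq_or_eq_succ_iff_towardsCenter a b
    · simp [towardsHub, hij, Ne.symm hij]

def hubDist : Option (Fin k × Fin 9) → ℕ
  | none => 0
  | some (_, a) => |(a : ℤ) - 4|.toNat + 1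

lemma hubDist_towardsHub_lt {v : Option (Fin k × Fin 9)} (hv : v ≠ none) :
    hubDist (towardsHub v) < hubDist v := by
  obtain _ | ⟨i, a⟩ := v
  · exact absurd rfl hv
  cases h : towardsCenter a with
  | none => simp [towardsHub, hubDist, h]
  | some b =>
    have := (towardsCenter_eq_some h).2
    have := abs_nonneg ((b : ℤ) - 4)
    simp only [towardsHub, hubDist, h, Option.map_some]
    omega

theorem isTree_treeP9 : (treeP9 k).IsTree :=
  treeP9_eq_parentGraph ▸ isTree_parentGraph none hubDist rfl fun _ => hubDist_towardsHub_lt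

lemma lipschitz_treeP9 (φ : Option (Fin k × Fin 9) → ℤ)
    (hhub : ∀ i, |φ (some (i, 4)) - φ none| ≤ 1)
    (hpath : ∀ i a b, towardsCenter a = some b → |φ (some (i, a)) - φ (some (i, b))| ≤ 1) :
    ∀ x y, (treeP9 k).Adj x y → |φ x - φ y| ≤ 1 := by
  refine treeP9_eq_parentGraph ▸ lipschitz_parentGraph φ ?_
  rintro (_ | ⟨i, a⟩)
  · simp [towardsHub]
  cases h : towardsCenter a with
  | none =>
    obtain rfl := towardsCenter_eq_none_iff.mp h
    simpa [towardsHub, h] using hhub i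
  | some b => simpa [towardsHub, h] using hpath i a b h

lemma abs_sub_le_dist_treeP9 (i : Fin k) (a b : Fin 9) :
    |(a : ℤ) - b| ≤ (treeP9 k).dist (some (i, a)) (some (i, b)) := by
  let φ : Option (Fin k × Fin 9) → ℤ := fun
    | none => 4
    | some (l, c) => if l = i then c else 4
  have hφ := lipschitz_treeP9 φ (fun l => by by_cases l = i <;> simp [φ, *]) fun l c d h => by
    by_cases l = i <;> simp [φ, (towardsCenter_eq_some h).1, *]
  simpa [φ] using abs_sub_le_dist_of_lipschitz φ hφ
    (isTree_treeP9.connected (some (i, a)) (some (i, b)))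

lemma add_le_dist_treeP9 {i j : Fin k} (hij : i ≠ j) (a b : Fin 9) :
    |(a : ℤ) - 4| + |(b : ℤ) - 4| + 2 ≤ (treeP9 k).dist (some (i, a)) (some (j, b)) := by
  let φ : Option (Fin k × Fin 9) → ℤ := fun
    | none => 0
    | some (l, c) =>
      if l = i then |(c : ℤ) - 4| + 1 else if l = j then -(|(c : ℤ) - 4| + 1) else 0
  have hφ := lipschitz_treeP9 φ
    (fun l => by by_cases l = i <;> by_cases l = j <;> simp [φ, Ne.symm hij, *])
    fun l c d h => by
      have := (towardsCenter_eq_some h).2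
      by_cases l = i <;> by_cases l = j <;> simp [φ, Ne.symm hij, *]
  have := abs_sub_le_dist_of_lipschitz φ hφ
    (isTree_treeP9.connected (some (i, a)) (some (j, b)))
  have h2 : φ (some (j, b)) = -(|(b : ℤ) - 4| + 1) := by simp [φ, Ne.symm hij]
  have h1 : φ (some (i, a)) = |(a : ℤ) - 4| + 1 := by simp [φ]
  rw [h1, h2] at this
  linarith [le_abs_self (|(a : ℤ) - 4| + 1 - -(|(b : ℤ) - 4| + 1))]

end TreeP9

section Counting

variable {k : ℕ}

def pathEdge (i : Fin k) (a : Fin 8) : Sym2 (Option (Fin k × Fin 9)) :=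
  s(some (i, a.castSucc), some (i, a.succ))

lemma pathEdge_inj {i j : Fin k} {a b : Fin 8} :
    pathEdge i a = pathEdge j b ↔ i = j ∧ a = b := by
  refine ⟨fun h => ?_, by rintro ⟨rfl, rfl⟩; rfl⟩
  simp only [pathEdge, Sym2.eq_iff, Option.some.injEq, Prod.mk.injEq, Fin.ext_iff,
    Fin.val_castSucc, Fin.val_succ] at h
  omega

lemma exists_of_mem_pathEdge {i : Fin k} {a : Fin 8} {u : Option (Fin k × Fin 9)}
    (hu : u ∈ pathEdge i a) :
    ∃ x : Fin 9, (x.val = a.val ∨ x.val = a.val + 1) ∧ u = some (i, x) := by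
  rcases Sym2.mem_iff.mp hu with rfl | rfl
  · exact ⟨_, .inl rfl, rfl⟩
  · exact ⟨_, .inr rfl, rfl⟩

lemma pathEdge_mem_edgeSet (i : Fin k) (a : Fin 8) : pathEdge i a ∈ (treeP9 k).edgeSet := by
  rw [treeP9, pathEdge, mem_edgeSet, fromRel_adj]
  exact ⟨by simp [Fin.ext_iff], .inl (.inl ⟨i, a, rfl, rfl⟩)⟩

lemma four_le_edgeDist_pathEdge_same (i : Fin k) {a b : Fin 8}
    (hab : a.val + 5 ≤ b.val ∨ b.val + 5 ≤ a.val) :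
    4 ≤ edgeDist (treeP9 k) (pathEdge i a) (pathEdge i b) := by
  refine le_edgeDist fun u hu v hv => ?_
  obtain ⟨x, hx, rfl⟩ := exists_of_mem_pathEdge hu
  obtain ⟨y, hy, rfl⟩ := exists_of_mem_pathEdge hv
  have := abs_sub_le_dist_treeP9 i x y
  rw [abs_eq_max_neg] at this
  omega

lemma four_le_edgeDist_pathEdge_of_ne {i j : Fin k} (hij : i ≠ j) {a b : Fin 8}
    (ha : a ≠ 3 ∧ a ≠ 4) (hb : b ≠ 3 ∧ b ≠ 4) :
    4 ≤ edgeDist (treeP9 k) (pathEdge i a) (pathEdge j b) := by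
  refine le_edgeDist fun u hu v hv => ?_
  obtain ⟨x, hx, rfl⟩ := exists_of_mem_pathEdge hu
  obtain ⟨y, hy, rfl⟩ := exists_of_mem_pathEdge hv
  have := add_le_dist_treeP9 hij x y
  rw [abs_eq_max_neg, abs_eq_max_neg] at this
  omega

/-- The 13 sets are `∅`, the six singletons off `{3, 4}` and `{0,5}, {0,6}, {0,7}, {1,6}, {1,7},
{2,7}`. -/
def farEdgeSets : Finset (Finset (Fin 8)) :=
  Finset.univ.filter fun S => 3 ∉ S ∧ 4 ∉ S ∧ ∀ a ∈ S, ∀ b ∈ S, a < b → a.val + 5 ≤ b.val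

lemma card_farEdgeSets : farEdgeSets.card = 13 := by decide

def farMatching (g : Fin k → farEdgeSets) : Set (Sym2 (Option (Fin k × Fin 9))) :=
  {e | ∃ i, ∃ a ∈ (g i).1, pathEdge i a = e}

lemma pathEdge_mem_farMatching {g : Fin k → farEdgeSets} {i : Fin k} {a : Fin 8} :
    pathEdge i a ∈ farMatching g ↔ a ∈ (g i).1 := by
  refine ⟨?_, fun ha => ⟨i, a, ha, rfl⟩⟩
  rintro ⟨j, b, hb, hba⟩
  obtain ⟨rfl, rfl⟩ := pathEdge_inj.mp hba
  exact hb

lemma isRMatching_farMatching (g : Fin k → farEdgeSets) :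
    IsRMatching (treeP9 k) 4 (farMatching g) := by
  refine ⟨?_, ?_⟩
  · rintro _ ⟨i, a, -, rfl⟩
    exact pathEdge_mem_edgeSet i a
  · rintro _ ⟨i, a, ha, rfl⟩ _ ⟨j, b, hb, rfl⟩ hne
    have hfar (l : Fin k) := (Finset.mem_filter.mp (g l).2).2
    by_cases hij : i = j
    · subst hij
      have hab : a ≠ b := fun h => hne (h ▸ rfl)
      refine four_le_edgeDist_pathEdge_same i ?_
      rcases lt_or_gt_of_ne hab with h | h
      · exact .inl ((hfar i).2.2 a ha b hb h)
      · exact .inr ((hfar i).2.2 b hb a ha h)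
    · exact four_le_edgeDist_pathEdge_of_ne hij
        ⟨ne_of_mem_of_not_mem ha (hfar i).1, ne_of_mem_of_not_mem ha (hfar i).2.1⟩
        ⟨ne_of_mem_of_not_mem hb (hfar j).1, ne_of_mem_of_not_mem hb (hfar j).2.1⟩

theorem thirteen_pow_le_card_isRMatching_treeP9 (k : ℕ) :
    13 ^ k ≤
      Nat.card {M : Set (Sym2 (Option (Fin k × Fin 9))) // IsRMatching (treeP9 k) 4 M} := by
  have hinj : Injective fun g => (⟨farMatching g, isRMatching_farMatching g⟩ :
      {M // IsRMatching (treeP9 k) 4 M}) := by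
    refine fun g g' h => funext fun i => Subtype.ext <| Finset.ext fun a => ?_
    have h' : farMatching g = farMatching g' := congrArg Subtype.val h
    rw [← pathEdge_mem_farMatching, ← pathEdge_mem_farMatching, h']
  calc 13 ^ k = Nat.card (Fin k → farEdgeSets) := by simp [card_farEdgeSets]
    _ ≤ _ := Nat.card_le_card_of_injective _ hinj

end Counting

def paddedTreeP9 (k m : ℕ) : SimpleGraph (Option (Fin k × Fin 9) ⊕ Fin m) :=
  parentGraph (Sum.elim (Sum.inl ∘ towardsHub) fun _ => Sum.inl none)

section Padding

variable {k m : ℕ}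

theorem isTree_paddedTreeP9 : (paddedTreeP9 k m).IsTree :=
  isTree_parentGraph (.inl none) (Sum.elim hubDist fun _ => 1) rfl <| by
    rintro (v | j) hv
    · exact hubDist_towardsHub_lt fun h => hv (congrArg Sum.inl h)
    · exact Nat.one_pos

theorem card_isRMatching_treeP9_le_paddedTreeP9 (d : ℕ) :
    Nat.card {M : Set (Sym2 (Option (Fin k × Fin 9))) // IsRMatching (treeP9 k) d M} ≤
      Nat.card {M // IsRMatching (paddedTreeP9 k m) d M} := by
  let r : Option (Fin k × Fin 9) ⊕ Fin m → Option (Fin k × Fin 9) := Sum.elim id fun _ => none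
  have hr : Semiconj r (Sum.elim (Sum.inl ∘ towardsHub) fun _ => Sum.inl none) towardsHub := by
    rintro (v | j) <;> rfl
  have hconn : (treeP9 k).Connected := isTree_treeP9.connected
  rw [treeP9_eq_parentGraph] at hconn ⊢
  exact card_isRMatching_le_of_retraction hconn
    (parentGraph.homOfSemiconj Sum.inl Sum.inl_injective fun _ => rfl) r (fun _ => rfl)
    (fun _ _ => parentGraph_eq_or_adj_of_semiconj r hr) d

end Padding

theorem exists_isTree_thirteen_pow_le_card_isRMatching (k m : ℕ) :
    ∃ T : SimpleGraph (Fin (9 * k + 1 + m)), T.IsTree ∧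
      13 ^ k ≤ Nat.card {M : Set (Sym2 (Fin (9 * k + 1 + m))) // IsRMatching T 4 M} := by
  have hcard : Fintype.card (Option (Fin k × Fin 9) ⊕ Fin m) = 9 * k + 1 + m := by
    simp [mul_comm]
  let e := Fintype.equivFinOfCardEq hcard
  refine ⟨(paddedTreeP9 k m).map e.toEmbedding,
    (Iso.map e _).isTree_iff.mp isTree_paddedTreeP9, ?_⟩
  calc 13 ^ k ≤ _ := thirteen_pow_le_card_isRMatching_treeP9 k
    _ ≤ _ := card_isRMatching_treeP9_le_paddedTreeP9 (m := m) 4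
    _ ≤ _ := card_isRMatching_le_map_equiv isTree_paddedTreeP9.connected e 4

theorem stmt_11 :
    (∀ k : ℕ, 0 < k →
      13 ^ k ≤ Nat.card {M : Set (Sym2 (Option (Fin k × Fin 9))) //
        IsRMatching (treeP9 k) 4 M}) ∧
    ∃ c : ℝ, 0 < c ∧ ∀ n : ℕ, 1 ≤ n → ∃ T : SimpleGraph (Fin n),
      T.Connected ∧ T.IsAcyclic ∧
      c * (13 : ℝ) ^ ((n : ℝ) / 9) ≤
        Nat.card {M : Set (Sym2 (Fin n)) // IsRMatching T 4 M} := by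
  refine ⟨fun k _ => thirteen_pow_le_card_isRMatching_treeP9 k, 1 / 13, by norm_num,
    fun n hn => ?_⟩
  obtain ⟨k, m, hm, rfl⟩ : ∃ k m, m < 9 ∧ n = 9 * k + 1 + m :=
    ⟨(n - 1) / 9, (n - 1) % 9, Nat.mod_lt _ (by norm_num), by omega⟩
  obtain ⟨T, hT, hcard⟩ := exists_isTree_thirteen_pow_le_card_isRMatching k m
  refine ⟨T, hT.connected, hT.isAcyclic, ?_⟩
  have hexp : ((9 * k + 1 + m : ℕ) : ℝ) / 9 ≤ (k + 1 : ℕ) := by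
    rw [div_le_iff₀ (by norm_num)]
    exact_mod_cast (by omega : 9 * k + 1 + m ≤ (k + 1) * 9)
  calc 1 / 13 * (13 : ℝ) ^ (((9 * k + 1 + m : ℕ) : ℝ) / 9)
      ≤ 1 / 13 * 13 ^ (k + 1) := by
        gcongr
        rw [← Real.rpow_natCast]
        exact Real.rpow_le_rpow_of_exponent_le (by norm_num) hexp
    _ = 13 ^ k := by ring
    _ ≤ _ := by exact_mod_cast hcard
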